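/- arXiv:1703.04805 — 2 statements merged into one kernel-verified Lean document; each statement's English description precedes it below -/
import Mathlib

section
/- Let 1 < p < ∞, q = p/(p-1), and for ξ ∈ 𝔻 define Ψ_ξ(z) = Γ(2/p)Γ(2/q)·∑_{k=0}^∞ ε_k (z·conj(ξ))^k where ε_k = ((2/p)_k/k!)·(Γ(k+2)Γ(k+1)/(Γ(k+1+2/q)Γ(k+2/p)) - 1). Then sup_{ξ∈𝔻} ∫_𝔻 |Ψ_ξ(z)|^p dν(z) < ∞. -/
open MeasureTheory Real Set ComplexConjugate

/-- Pochhammer symbol `(a)_n` for a real number `a`. -/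
noncomputable def poch (a : ℝ) (n : ℕ) : ℝ := ∏ i ∈ Finset.range n, (a + i)

/-- The coefficients `ε_k` from Lemma 2.5. -/
noncomputable def eps (p q : ℝ) (k : ℕ) : ℝ :=
  poch (2 / p) k / k.factorial *
    (Real.Gamma (k + 2) * Real.Gamma (k + 1) /
        (Real.Gamma (k + 1 + 2 / q) * Real.Gamma (k + 2 / p)) - 1)

/-- The function `Ψ_ξ`. -/
noncomputable def PsiF (p q : ℝ) (ξ z : ℂ) : ℂ :=
  ((Real.Gamma (2 / p) * Real.Gamma (2 / q) : ℝ) : ℂ) *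
    ∑' k : ℕ, ((eps p q k : ℝ) : ℂ) * (z * conj ξ) ^ k

/-!
Write `t = 2/p`, so that `2/q = 2 - t`. Log-convexity of `Γ` between `y` and `y + 1` gives
`Γ(y + u) ≤ Γ(y) y^u` for `0 ≤ u ≤ 1`, and four instances of it show that the Gamma quotient in
`ε_k` is `1 + O(1/k)`, so `|ε_k| ≤ 2 (t)_k / (k+1)!`. For `0 < a ≤ 1` with `t - 1 ≤ a` this is
at most `(2/a) (a)_k / k!`, the `k`-th coefficient of `(1 - r)^{-a}`, hence
`|Ψ_ξ(z)| ≲ (1 - |z|)^{-a}` uniformly in `ξ`. Since `(t - 1) p = 2 - p < 1`, the exponent `a`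
can be chosen with `a p < 1`, and then `(1 - |z|)^{-ap}` is integrable over the disc.
-/

lemma poch_nonneg {a : ℝ} (ha : 0 ≤ a) (k : ℕ) : 0 ≤ poch a k :=
  Finset.prod_nonneg fun _ _ => by positivity

lemma poch_le_poch {a b : ℝ} (ha : 0 ≤ a) (hab : a ≤ b) (k : ℕ) : poch a k ≤ poch b k :=
  Finset.prod_le_prod (fun _ _ => by positivity) fun _ _ => by linarith

lemma poch_succ_eq_mul_poch_add_one (a : ℝ) (k : ℕ) : poch a (k + 1) = a * poch (a + 1) k := by
  simp only [poch, Finset.prod_range_succ', Nat.cast_add, Nat.cast_one, Nat.cast_zero, add_zero]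
  rw [mul_comm]
  congr 1
  exact Finset.prod_congr rfl fun _ _ => by ring

lemma poch_div_factorial_succ_le {a t : ℝ} (ht : 0 ≤ t) (ha0 : 0 < a) (ha1 : a ≤ 1)
    (hta : t ≤ a + 1) (k : ℕ) : poch t k / (k + 1).factorial ≤ poch a k / k.factorial / a := by
  have h : a * poch t k ≤ poch a k * (k + 1) :=
    calc a * poch t k ≤ a * poch (a + 1) k := by gcongr; exact poch_le_poch ht hta k
      _ = poch a k * (a + k) := by
          rw [← poch_succ_eq_mul_poch_add_one, poch, Finset.prod_range_succ, ← poch]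
      _ ≤ poch a k * (k + 1) := mul_le_mul_of_nonneg_left (by linarith) (poch_nonneg ha0.le k)
  rw [Nat.factorial_succ, Nat.cast_mul, div_div, div_le_div_iff₀ (by positivity) (by positivity)]
  push_cast
  nlinarith [Nat.factorial_pos k]

lemma poch_eq_ascPochhammer_eval (a : ℝ) (k : ℕ) : poch a k = (ascPochhammer ℝ k).eval a := by
  induction k with
  | zero => simp [poch]
  | succ k ih => rw [poch, Finset.prod_range_succ, ← poch, ih, ascPochhammer_succ_eval]

lemma poch_div_factorial_eq_choose (a : ℝ) (k : ℕ) :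
    poch a k / k.factorial = Ring.choose (a + k - 1) k := by
  rw [← Ring.multichoose_eq, div_eq_iff (by positivity), mul_comm, ← nsmul_eq_mul,
    Ring.factorial_nsmul_multichoose_eq_ascPochhammer, Polynomial.ascPochhammer_smeval_eq_eval,
    poch_eq_ascPochhammer_eval]

lemma hasSum_poch_div_factorial_mul_pow (a : ℝ) {r : ℝ} (hr : ‖r‖ < 1) :
    HasSum (fun k : ℕ => poch a k / k.factorial * r ^ k) ((1 - r) ^ (-a)) := by
  have := (Real.one_div_one_sub_rpow_hasFPowerSeriesOnBall_zero a).hasSum (y := r)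
    (by simpa [← ofReal_norm] using hr)
  rw [Real.rpow_neg (by linarith [le_abs_self r, Real.norm_eq_abs r])]
  simpa [FormalMultilinearSeries.ofScalars_apply_eq, poch_div_factorial_eq_choose, mul_comm]
    using this

lemma norm_tsum_le_of_abs_le_poch {c : ℕ → ℝ} {C a : ℝ}
    (hc : ∀ k, |c k| ≤ C * (poch a k / k.factorial)) {w : ℂ} (hw : ‖w‖ < 1) :
    ‖∑' k, (c k : ℂ) * w ^ k‖ ≤ C * (1 - ‖w‖) ^ (-a) := by
  refine tsum_of_norm_bounded
    ((hasSum_poch_div_factorial_mul_pow a (r := ‖w‖) (by simpa using hw)).mul_left C) fun k => ?_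
  rw [norm_mul, norm_pow, Complex.norm_real, Real.norm_eq_abs, ← mul_assoc]
  gcongr
  exact hc k

lemma Gamma_add_le_mul_rpow {y u : ℝ} (hy : 0 < y) (hu0 : 0 ≤ u) (hu1 : u ≤ 1) :
    Gamma (y + u) ≤ Gamma y * y ^ u := by
  have hc := convexOn_log_Gamma.2 (mem_Ioi.2 hy) (mem_Ioi.2 (by linarith : 0 < y + 1))
    (sub_nonneg.2 hu1) hu0 (by ring)
  simp only [smul_eq_mul, Function.comp_apply] at hc
  rw [show (1 - u) * y + u * (y + 1) = y + u by ring, Gamma_add_one hy.ne',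
    log_mul hy.ne' (Gamma_pos_of_pos hy).ne'] at hc
  rw [← log_le_log_iff (Gamma_pos_of_pos (by linarith)) (by positivity),
    log_mul (Gamma_pos_of_pos hy).ne' (by positivity), log_rpow hy]
  linarith

lemma rpow_mul_rpow_one_sub_le {a b c u : ℝ} (ha : 0 ≤ a) (hb : 0 ≤ b) (hac : a ≤ c)
    (hbc : b ≤ c) (hu0 : 0 ≤ u) (hu1 : u ≤ 1) : a ^ u * b ^ (1 - u) ≤ c := by
  have hc : 0 ≤ c := ha.trans hac
  calc a ^ u * b ^ (1 - u) ≤ c ^ u * c ^ (1 - u) := by gcongr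
    _ = c := by rw [← rpow_add' hc (by norm_num), add_sub_cancel, rpow_one]

lemma Gamma_mul_Gamma_bounds_of_nonneg {x s : ℝ} (hx : 0 < x) (hs0 : 0 ≤ s) (hs1 : s ≤ 1) :
    Gamma (x + 1 - s) * Gamma (x + s) ≤ Gamma (x + 1) * Gamma x ∧
      x * (Gamma (x + 1) * Gamma x) ≤ (x + 1) * (Gamma (x + 1 - s) * Gamma (x + s)) := by
  have hΓ : Gamma (x + 1) = x * Gamma x := Gamma_add_one hx.ne'
  have hG₁ : 0 < Gamma (x + 1 - s) := Gamma_pos_of_pos (by linarith)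
  constructor
  · have h₁ := Gamma_add_le_mul_rpow hx (by linarith : 0 ≤ 1 - s) (by linarith)
    have h₂ := Gamma_add_le_mul_rpow hx hs0 hs1
    rw [← add_sub_assoc] at h₁
    calc Gamma (x + 1 - s) * Gamma (x + s) ≤ Gamma x * x ^ (1 - s) * (Gamma x * x ^ s) := by
          gcongr
      _ = Gamma (x + 1) * Gamma x := by
          rw [hΓ, mul_mul_mul_comm, ← rpow_add hx, sub_add_cancel, rpow_one]; ring
  · have h₁ := Gamma_add_le_mul_rpow (by linarith : 0 < x + 1 - s) hs0 hs1
    have h₂ := Gamma_add_le_mul_rpow (by linarith : 0 < x + s) (by linarith : 0 ≤ 1 - s)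
      (by linarith)
    rw [sub_add_cancel] at h₁
    rw [add_add_sub_cancel] at h₂
    have hpow := rpow_mul_rpow_one_sub_le (by linarith : 0 ≤ x + 1 - s)
      (by linarith : 0 ≤ x + s) (by linarith : x + 1 - s ≤ x + 1) (by linarith) hs0 hs1
    calc x * (Gamma (x + 1) * Gamma x) = Gamma (x + 1) * Gamma (x + 1) := by rw [hΓ]; ring
      _ ≤ Gamma (x + 1 - s) * (x + 1 - s) ^ s * (Gamma (x + s) * (x + s) ^ (1 - s)) := by
          gcongr
          exact mul_nonneg hG₁.le (rpow_nonneg (by linarith) _)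
      _ = Gamma (x + 1 - s) * Gamma (x + s) * ((x + 1 - s) ^ s * (x + s) ^ (1 - s)) := by ring
      _ ≤ Gamma (x + 1 - s) * Gamma (x + s) * (x + 1) := by gcongr
      _ = (x + 1) * (Gamma (x + 1 - s) * Gamma (x + s)) := by ring

lemma Gamma_mul_Gamma_bounds_of_nonpos {x s : ℝ} (hxs : 0 < x + s) (hs0 : -1 ≤ s)
    (hs1 : s ≤ 0) :
    (x + 1) * (Gamma (x + 1) * Gamma x) ≤ (x + 2) * (Gamma (x + 1 - s) * Gamma (x + s)) ∧
      (x + s) * (Gamma (x + 1 - s) * Gamma (x + s)) ≤ (x + 1) * (Gamma (x + 1) * Gamma x) := by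
  have hx : 0 < x := by linarith
  have hG₁ : 0 < Gamma (x + 1 - s) := Gamma_pos_of_pos (by linarith)
  constructor
  · have h₁ := Gamma_add_le_mul_rpow (by linarith : 0 < x + 1 - s) (by linarith : 0 ≤ 1 + s)
      (by linarith)
    have h₂ := Gamma_add_le_mul_rpow hxs (by linarith : 0 ≤ -s) (by linarith)
    rw [show x + 1 - s + (1 + s) = x + 1 + 1 by ring, Gamma_add_one (by linarith)] at h₁
    rw [add_neg_cancel_right] at h₂
    have hpow := rpow_mul_rpow_one_sub_le (by linarith : 0 ≤ x + 1 - s) hxs.le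
      (by linarith : x + 1 - s ≤ x + 2) (by linarith : x + s ≤ x + 2) (by linarith : 0 ≤ 1 + s)
      (by linarith)
    rw [show 1 - (1 + s) = -s by ring] at hpow
    calc (x + 1) * (Gamma (x + 1) * Gamma x)
        ≤ Gamma (x + 1 - s) * (x + 1 - s) ^ (1 + s) * (Gamma (x + s) * (x + s) ^ (-s)) := by
          rw [← mul_assoc]
          gcongr
          exact mul_nonneg hG₁.le (rpow_nonneg (by linarith) _)
      _ = Gamma (x + 1 - s) * Gamma (x + s) * ((x + 1 - s) ^ (1 + s) * (x + s) ^ (-s)) := by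
          ring
      _ ≤ Gamma (x + 1 - s) * Gamma (x + s) * (x + 2) := by gcongr
      _ = (x + 2) * (Gamma (x + 1 - s) * Gamma (x + s)) := by ring
  · have h₁ := Gamma_add_le_mul_rpow (by linarith : 0 < x + 1) (by linarith : 0 ≤ -s)
      (by linarith)
    have h₂ := Gamma_add_le_mul_rpow hx (by linarith : 0 ≤ 1 + s) (by linarith)
    rw [← sub_eq_add_neg] at h₁
    rw [← add_assoc, add_right_comm, Gamma_add_one hxs.ne'] at h₂
    have hpow := rpow_mul_rpow_one_sub_le hx.le (by linarith : 0 ≤ x + 1)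
      (by linarith : x ≤ x + 1) le_rfl (by linarith : 0 ≤ 1 + s) (by linarith)
    rw [show 1 - (1 + s) = -s by ring] at hpow
    calc (x + s) * (Gamma (x + 1 - s) * Gamma (x + s))
        = Gamma (x + 1 - s) * ((x + s) * Gamma (x + s)) := by ring
      _ ≤ Gamma (x + 1) * (x + 1) ^ (-s) * (Gamma x * x ^ (1 + s)) := by
          gcongr
      _ = Gamma (x + 1) * Gamma x * (x ^ (1 + s) * (x + 1) ^ (-s)) := by ring
      _ ≤ Gamma (x + 1) * Gamma x * (x + 1) := by gcongr
      _ = (x + 1) * (Gamma (x + 1) * Gamma x) := by ring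

lemma abs_Gamma_mul_Gamma_div_sub_one_le {x s : ℝ} (hx : 1 ≤ x) (hs0 : -1 < s) (hs1 : s ≤ 1) :
    |Gamma (x + 1) * Gamma x / (Gamma (x + 1 - s) * Gamma (x + s)) - 1| ≤ 2 / x := by
  set N := Gamma (x + 1) * Gamma x
  set D := Gamma (x + 1 - s) * Gamma (x + s)
  have hD : 0 < D := mul_pos (Gamma_pos_of_pos (by linarith)) (Gamma_pos_of_pos (by linarith))
  have key : x * N ≤ (x + 1) * D ∧ (x - 1) * D ≤ (x + 1) * N := by
    rcases le_total 0 s with hs | hs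
    · obtain ⟨h₁, h₂⟩ := Gamma_mul_Gamma_bounds_of_nonneg (x := x) (by linarith) hs hs1
      exact ⟨h₂, by nlinarith⟩
    · obtain ⟨h₁, h₂⟩ := Gamma_mul_Gamma_bounds_of_nonpos (x := x) (by linarith) hs0.le hs
      exact ⟨by nlinarith, by nlinarith⟩
  have hx0 : 0 < x := by linarith
  rw [abs_le, le_sub_iff_add_le, sub_le_iff_le_add, le_div_iff₀ hD, div_le_iff₀ hD]
  constructor
  · rw [← mul_le_mul_iff_of_pos_left hx0]
    field_simp
    nlinarith
  · rw [← mul_le_mul_iff_of_pos_left hx0]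
    field_simp
    nlinarith

lemma abs_eps_le {p q a : ℝ} (hp1 : 1 < p) (hq : q = p / (p - 1)) (ha0 : 0 < a) (ha1 : a ≤ 1)
    (hpa : 2 / p - 1 ≤ a) (k : ℕ) : |eps p q k| ≤ 2 / a * (poch a k / k.factorial) := by
  have hp0 : 0 < p := by linarith
  have ht0 : 0 < 2 / p := by positivity
  have ht2 : 2 / p ≤ 2 := by rw [div_le_iff₀ hp0]; linarith
  have h2q : 2 / q = 2 - 2 / p := by rw [hq]; field_simp
  have hR := abs_Gamma_mul_Gamma_div_sub_one_le (x := k + 1) (s := 2 / p - 1) (by simp)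
    (by linarith) (by linarith)
  rw [show (k : ℝ) + 1 + 1 - (2 / p - 1) = k + 1 + 2 / q by rw [h2q]; ring,
    show (k : ℝ) + 1 + (2 / p - 1) = k + 2 / p by ring,
    show (k : ℝ) + 1 + 1 = k + 2 by ring] at hR
  have hc : 0 ≤ poch (2 / p) k / k.factorial := div_nonneg (poch_nonneg ht0.le k) (by positivity)
  rw [eps, abs_mul, abs_of_nonneg hc]
  calc poch (2 / p) k / k.factorial * |Gamma (k + 2) * Gamma (k + 1) /
        (Gamma (k + 1 + 2 / q) * Gamma (k + 2 / p)) - 1|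
      ≤ poch (2 / p) k / k.factorial * (2 / (k + 1)) := by gcongr
    _ = 2 * (poch (2 / p) k / (k + 1).factorial) := by
        rw [Nat.factorial_succ]; push_cast; field_simp
    _ ≤ 2 * (poch a k / k.factorial / a) := by
        gcongr 2 * ?_
        exact poch_div_factorial_succ_le ht0.le ha0 ha1 (by linarith) k
    _ = 2 / a * (poch a k / k.factorial) := by ring

lemma integrableOn_ball_one_sub_norm_rpow {c : ℝ} (hc : c < 1) :
    IntegrableOn (fun z : ℂ => (1 - ‖z‖) ^ (-c)) (Metric.ball 0 1) := by
  rw [integrableOn_fun_norm_addHaar volume (f := fun y : ℝ => (1 - y) ^ (-c)),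
    Complex.finrank_real_complex]
  have h : IntegrableOn (fun y : ℝ => (1 - y) ^ (-c)) (Ioo 0 1) := by
    have := (intervalIntegral.intervalIntegrable_rpow' (a := 0) (b := 1)
      (by linarith : -1 < -c)).comp_sub_left 1
    rw [sub_zero, sub_self] at this
    exact (intervalIntegrable_iff_integrableOn_Ioo_of_le zero_le_one).1 this.symm
  refine h.mono' (by fun_prop) ((ae_restrict_iff' measurableSet_Ioo).2 (.of_forall ?_))
  rintro y ⟨hy0, hy1⟩
  rw [pow_one, smul_eq_mul, norm_mul, Real.norm_of_nonneg hy0.le,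
    Real.norm_of_nonneg (rpow_nonneg (by linarith) _)]
  exact mul_le_of_le_one_left (rpow_nonneg (by linarith) _) hy1.le

lemma exists_pos_two_div_sub_one_le_mul_lt_one {p : ℝ} (hp : 1 < p) :
    ∃ a : ℝ, 0 < a ∧ 2 / p - 1 ≤ a ∧ a * p < 1 := by
  have hp0 : 0 < p := by linarith
  refine ⟨max (2 / p - 1) (p⁻¹ / 2), lt_max_of_lt_right (by positivity), le_max_left _ _, ?_⟩
  rw [max_mul_of_nonneg _ _ hp0.le, max_lt_iff, sub_mul, div_mul_cancel₀ _ hp0.ne',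
    div_mul_eq_mul_div, inv_mul_cancel₀ hp0.ne']
  constructor <;> linarith

lemma norm_PsiF_le {p q a : ℝ} (hp1 : 1 < p) (hq : q = p / (p - 1)) (ha0 : 0 < a) (ha1 : a ≤ 1)
    (hpa : 2 / p - 1 ≤ a) {ξ z : ℂ} (hξ : ‖ξ‖ ≤ 1) (hz : ‖z‖ < 1) :
    ‖PsiF p q ξ z‖ ≤ |Gamma (2 / p) * Gamma (2 / q)| * (2 / a) * (1 - ‖z‖) ^ (-a) := by
  have hw : ‖z * conj ξ‖ ≤ ‖z‖ := by
    rw [norm_mul, Complex.norm_conj]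
    exact mul_le_of_le_one_right (norm_nonneg _) hξ
  rw [PsiF, norm_mul, Complex.norm_real, Real.norm_eq_abs, mul_assoc]
  gcongr
  calc ‖∑' k, (eps p q k : ℂ) * (z * conj ξ) ^ k‖ ≤ 2 / a * (1 - ‖z * conj ξ‖) ^ (-a) :=
        norm_tsum_le_of_abs_le_poch (abs_eps_le hp1 hq ha0 ha1 hpa) (hw.trans_lt hz)
    _ ≤ 2 / a * (1 - ‖z‖) ^ (-a) := mul_le_mul_of_nonneg_left
        (rpow_le_rpow_of_nonpos (sub_pos.2 hz) (by linarith) (by linarith)) (by positivity)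

/-- Lemma 2.5 (first part): `sup_{ξ∈𝔻} ∫_𝔻 |Ψ_ξ|^p dν < ∞`. -/
theorem sup_Psi_finite (p q : ℝ) (hp1 : 1 < p) (hq : q = p / (p - 1)) :
    ∃ M : ℝ, ∀ ξ : ℂ, ‖ξ‖ < 1 →
      (∫ z in Metric.ball (0:ℂ) 1, ‖PsiF p q ξ z‖ ^ p) / π ≤ M := by
  have hp0 : 0 < p := by linarith
  obtain ⟨a, ha0, hpa, hap⟩ := exists_pos_two_div_sub_one_le_mul_lt_one hp1
  have ha1 : a ≤ 1 := by nlinarith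
  set K := |Gamma (2 / p) * Gamma (2 / q)| * (2 / a)
  refine ⟨(∫ z in Metric.ball (0:ℂ) 1, K ^ p * (1 - ‖z‖) ^ (-(a * p))) / π, fun ξ hξ => ?_⟩
  refine div_le_div_of_nonneg_right ?_ pi_pos.le
  refine integral_mono_of_nonneg (.of_forall fun z => rpow_nonneg (norm_nonneg _) p)
    ((integrableOn_ball_one_sub_norm_rpow hap).const_mul _)
    ((ae_restrict_iff' measurableSet_ball).2 (.of_forall fun z hz => ?_))
  have hz1 : ‖z‖ < 1 := mem_ball_zero_iff.1 hz
  calc ‖PsiF p q ξ z‖ ^ p ≤ (K * (1 - ‖z‖) ^ (-a)) ^ p :=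
        rpow_le_rpow (norm_nonneg _) (norm_PsiF_le hp1 hq ha0 ha1 hpa hξ.le hz1) hp0.le
    _ = K ^ p * (1 - ‖z‖) ^ (-(a * p)) := by
        rw [mul_rpow (by positivity) (rpow_nonneg (by linarith) _), ← rpow_mul (by linarith),
          neg_mul]
end

section
/- Gauss summation: for real a, b, c with c not a nonpositive integer and c - a - b > 0, the hypergeometric series F(a,b;c;1) = ∑_{n≥0} (a)_n(b)_n/((c)_n n!) converges and equals Γ(c)Γ(c-a-b)/(Γ(c-a)Γ(c-b)). -/
/-!
Summing Gauss's termwise contiguous identity telescopically gives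
`c (c - a - b) F(a, b; c) = (c - a) (c - b) F(a, b; c + 1)`, which iterates to
`F(a, b; c) = (c - a)_m (c - b)_m / ((c)_m (c - a - b)_m) · F(a, b; c + m)`.
As `m → ∞` the prefactor tends to `Γ(c) Γ(c - a - b) / (Γ(c - a) Γ(c - b))` by Euler's limit
`Γ(x) = lim n^x n! / (x)_{n+1}`, and `F(a, b; c + m) → 1` because, by termwise comparison with
`F(|a|, |b|; u)` for a fixed large `u`, the series minus its first term is `O(1/m)`.
Euler's limit also gives `t_n ~ Γ(c) / (Γ(a) Γ(b)) · n^(a + b - c - 1)` for the terms, hence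
convergence and `n t_n → 0`, which kills the boundary term of the telescoping.
-/

open Real

open Filter Finset Asymptotics Topology
open scoped Nat

lemma poch_succ_right (x : ℝ) (n : ℕ) : poch x (n + 1) = poch x n * (x + n) :=
  prod_range_succ _ _

lemma poch_succ_left (x : ℝ) (n : ℕ) : poch x (n + 1) = x * poch (x + 1) n := by
  simp only [poch, prod_range_succ', Nat.cast_add, Nat.cast_one, Nat.cast_zero, add_zero]
  rw [mul_comm]
  congr 1
  exact prod_congr rfl fun i _ => by ring

lemma poch_one_left (n : ℕ) : poch 1 n = n ! := by
  rw [poch, ← prod_range_add_one_eq_factorial]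
  push_cast
  exact prod_congr rfl fun i _ => add_comm _ _

lemma poch_ne_zero {x : ℝ} (hx : ∀ m : ℕ, x ≠ -m) (n : ℕ) : poch x n ≠ 0 :=
  prod_ne_zero_iff.2 fun i _ h => hx i (by linarith)

lemma poch_neg_natCast_of_lt {m n : ℕ} (hmn : m < n) : poch (-m) n = 0 :=
  prod_eq_zero (mem_range.2 hmn) (neg_add_cancel _)

lemma poch_pos {x : ℝ} (hx : 0 < x) (n : ℕ) : 0 < poch x n :=
  prod_pos fun _ _ => by positivity

lemma poch_nonneg_s16 {x : ℝ} (hx : 0 ≤ x) (n : ℕ) : 0 ≤ poch x n :=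
  prod_nonneg fun _ _ => by positivity

lemma poch_le_poch_s16 {x y : ℝ} (hx : 0 ≤ x) (hxy : x ≤ y) (n : ℕ) : poch x n ≤ poch y n :=
  prod_le_prod (fun _ _ => by positivity) fun _ _ => by linarith

lemma abs_poch_le (x : ℝ) (n : ℕ) : |poch x n| ≤ poch |x| n := by
  rw [poch, abs_prod]
  exact prod_le_prod (fun _ _ => abs_nonneg _) fun i _ =>
    (abs_add_le _ _).trans_eq (by rw [Nat.abs_cast])

lemma GammaSeq_eq_div_poch (x : ℝ) (n : ℕ) : GammaSeq x n = n ^ x * n ! / poch x (n + 1) := rfl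

lemma GammaSeq_div_GammaSeq (x y : ℝ) {n : ℕ} (hn : n ≠ 0) :
    GammaSeq y n / GammaSeq x n = n ^ (y - x) * poch x (n + 1) / poch y (n + 1) := by
  have hn' : (0 : ℝ) < n := by positivity
  rw [GammaSeq_eq_div_poch, GammaSeq_eq_div_poch, rpow_sub hn', div_div_eq_mul_div]
  have hfac : (n ! : ℝ) ≠ 0 := by positivity
  have hpow : (n : ℝ) ^ x ≠ 0 := by positivity
  field_simp

-- No hypothesis on `x` is needed: if `Γ x = 0` then `x = -m`, so `GammaSeq x n = 0` for `n ≥ m`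
-- and both sides vanish by the convention `t / 0 = 0`.
lemma tendsto_GammaSeq_div_GammaSeq (x y : ℝ) :
    Tendsto (fun n ↦ GammaSeq y n / GammaSeq x n) atTop (𝓝 (Gamma y / Gamma x)) := by
  by_cases hx : Gamma x = 0
  · obtain ⟨m, rfl⟩ := (Gamma_eq_zero_iff x).1 hx
    rw [hx, div_zero]
    refine tendsto_const_nhds.congr' ?_
    filter_upwards [eventually_ge_atTop m] with n hmn
    rw [GammaSeq_eq_div_poch (-m), poch_neg_natCast_of_lt (Nat.lt_succ_of_le hmn), div_zero,
      div_zero]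
  · exact (GammaSeq_tendsto_Gamma y).div (GammaSeq_tendsto_Gamma x) hx

lemma tendsto_rpow_mul_poch_div_poch (x y : ℝ) :
    Tendsto (fun n : ℕ ↦ (n : ℝ) ^ (y - x) * poch x (n + 1) / poch y (n + 1)) atTop
      (𝓝 (Gamma y / Gamma x)) := by
  refine (tendsto_GammaSeq_div_GammaSeq x y).congr' ?_
  filter_upwards [eventually_ne_atTop 0] with n hn
  exact GammaSeq_div_GammaSeq x y hn

lemma summable_of_tendsto_rpow_mul {u : ℕ → ℝ} {s L : ℝ} (hs : 1 < s)
    (h : Tendsto (fun n : ℕ ↦ (n : ℝ) ^ s * u (n + 1)) atTop (𝓝 L)) : Summable u := by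
  have hO : (fun n ↦ u (n + 1)) =O[atTop] fun n : ℕ ↦ (n : ℝ) ^ (-s) := by
    refine ((h.isBigO_one ℝ).mul (isBigO_refl (fun n : ℕ ↦ (n : ℝ) ^ (-s)) atTop)).congr' ?_
      (by simp)
    filter_upwards [eventually_ne_atTop 0] with n hn
    rw [mul_comm, ← mul_assoc, ← rpow_add (by positivity), neg_add_cancel, rpow_zero, one_mul]
  exact (summable_nat_add_iff 1).1 (summable_of_isBigO_nat (summable_nat_rpow.2 (by linarith)) hO)

lemma tendsto_natCast_mul_of_tendsto_rpow_mul {u : ℕ → ℝ} {s L : ℝ} (hs : 1 < s)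
    (h : Tendsto (fun n : ℕ ↦ (n : ℝ) ^ s * u (n + 1)) atTop (𝓝 L)) :
    Tendsto (fun n : ℕ ↦ n * u n) atTop (𝓝 0) := by
  have hpow : Tendsto (fun n : ℕ ↦ (n : ℝ) ^ (1 - s)) atTop (𝓝 0) := by
    simpa only [neg_sub, Function.comp_def] using
      (tendsto_rpow_neg_atTop (by linarith : 0 < s - 1)).comp tendsto_natCast_atTop_atTop
  have hmul : Tendsto (fun n : ℕ ↦ (n : ℝ) * u (n + 1)) atTop (𝓝 0) := by
    refine (zero_mul L ▸ hpow.mul h).congr' ?_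
    filter_upwards [eventually_ne_atTop 0] with n hn
    rw [← mul_assoc, ← rpow_add (by positivity), sub_add_cancel, rpow_one]
  have hsucc := (summable_nat_add_iff 1).2 (summable_of_tendsto_rpow_mul hs h)
  rw [← tendsto_add_atTop_iff_nat 1]
  simpa [add_mul] using hmul.add hsucc.tendsto_atTop_zero

noncomputable def hypergeomTerm (a b c : ℝ) (n : ℕ) : ℝ :=
  poch a n * poch b n / (poch c n * n !)

lemma hypergeomTerm_zero (a b c : ℝ) : hypergeomTerm a b c 0 = 1 := by
  simp [hypergeomTerm, poch]

noncomputable def hypergeomAtOne (a b c : ℝ) : ℝ :=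
  ∑' n, hypergeomTerm a b c n

lemma tendsto_rpow_mul_hypergeomTerm (a b c : ℝ) :
    Tendsto (fun n : ℕ ↦ (n : ℝ) ^ (c + 1 - a - b) * hypergeomTerm a b c (n + 1)) atTop
      (𝓝 (Gamma c / (Gamma a * Gamma b))) := by
  have h := (tendsto_rpow_mul_poch_div_poch a c).mul (tendsto_rpow_mul_poch_div_poch b 1)
  rw [Gamma_one, div_mul_div_comm, mul_one] at h
  refine h.congr' ?_
  filter_upwards [eventually_ne_atTop 0] with n hn
  have hn' : (0 : ℝ) < n := by positivity
  rw [hypergeomTerm, poch_one_left, show c + 1 - a - b = (c - a) + (1 - b) by ring,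
    rpow_add hn']
  ring

lemma summable_hypergeomTerm {a b c : ℝ} (h : 0 < c - a - b) :
    Summable (hypergeomTerm a b c) :=
  summable_of_tendsto_rpow_mul (by linarith) (tendsto_rpow_mul_hypergeomTerm a b c)

lemma tendsto_natCast_mul_hypergeomTerm {a b c : ℝ} (h : 0 < c - a - b) :
    Tendsto (fun n : ℕ ↦ n * hypergeomTerm a b c n) atTop (𝓝 0) :=
  tendsto_natCast_mul_of_tendsto_rpow_mul (by linarith) (tendsto_rpow_mul_hypergeomTerm a b c)

lemma hypergeomTerm_contiguous {a b c : ℝ} (hc : ∀ m : ℕ, c ≠ -m) (n : ℕ) :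
    c * (c - a - b) * hypergeomTerm a b c n - (c - a) * (c - b) * hypergeomTerm a b (c + 1) n =
      c * (n * hypergeomTerm a b c n) - c * ((n + 1 : ℕ) * hypergeomTerm a b c (n + 1)) := by
  have hc₀ : c ≠ 0 := by simpa using hc 0
  have hcn : c + n ≠ 0 := fun h ↦ hc n (by linarith)
  have hpoch := poch_ne_zero hc n
  have hpoch' : poch (c + 1) n = poch c n * (c + n) / c := by
    rw [← poch_succ_right, poch_succ_left, mul_div_cancel_left₀ _ hc₀]
  simp only [hypergeomTerm, poch_succ_right a, poch_succ_right b, poch_succ_right c, hpoch',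
    Nat.factorial_succ]
  push_cast
  field_simp
  ring

lemma hypergeomAtOne_contiguous {a b c : ℝ} (hc : ∀ m : ℕ, c ≠ -m) (h : 0 < c - a - b) :
    c * (c - a - b) * hypergeomAtOne a b c = (c - a) * (c - b) * hypergeomAtOne a b (c + 1) := by
  have h₁ : 0 < c + 1 - a - b := by linarith
  have hsum := ((summable_hypergeomTerm h).hasSum.tendsto_sum_nat.const_mul (c * (c - a - b))).sub
    ((summable_hypergeomTerm h₁).hasSum.tendsto_sum_nat.const_mul ((c - a) * (c - b)))
  have htelescope : Tendsto (fun n : ℕ ↦ -(c * (n * hypergeomTerm a b c n))) atTop (𝓝 0) := by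
    simpa using ((tendsto_natCast_mul_hypergeomTerm h).const_mul c).neg
  refine sub_eq_zero.1 (tendsto_nhds_unique hsum (htelescope.congr fun n ↦ ?_))
  rw [mul_sum, mul_sum, ← sum_sub_distrib]
  simp only [hypergeomTerm_contiguous hc]
  rw [sum_range_sub' (fun k : ℕ ↦ c * (k * hypergeomTerm a b c k))]
  simp only [Nat.cast_zero, zero_mul, mul_zero, zero_sub]

lemma hypergeomAtOne_eq_mul_shift {a b c : ℝ} (hc : ∀ m : ℕ, c ≠ -m) (h : 0 < c - a - b) (n : ℕ) :
    hypergeomAtOne a b c = poch (c - a) n * poch (c - b) n / (poch c n * poch (c - a - b) n) *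
      hypergeomAtOne a b (c + n) := by
  induction n with
  | zero => simp [poch]
  | succ n ih =>
    have hcn : ∀ m : ℕ, c + n ≠ -m := fun m h ↦ hc (n + m) (by push_cast; linarith)
    have hcn₀ : c + n ≠ 0 := by simpa using hcn 0
    have hstep : hypergeomAtOne a b (c + n) = (c - a + n) * (c - b + n) /
        ((c + n) * (c - a - b + n)) * hypergeomAtOne a b (c + (n + 1 : ℕ)) := by
      rw [Nat.cast_succ, ← add_assoc, div_mul_eq_mul_div,
        eq_div_iff (mul_ne_zero hcn₀ (by positivity))]
      linear_combination hypergeomAtOne_contiguous (a := a) (b := b) hcn (by linarith)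
    rw [ih, hstep, ← mul_assoc, div_mul_div_comm]
    simp only [poch_succ_right]
    congr 2 <;> ring

lemma tendsto_poch_ratio_Gamma (a b c : ℝ) :
    Tendsto (fun n : ℕ ↦ poch (c - a) n * poch (c - b) n / (poch c n * poch (c - a - b) n)) atTop
      (𝓝 (Gamma c * Gamma (c - a - b) / (Gamma (c - a) * Gamma (c - b)))) := by
  have h := (tendsto_rpow_mul_poch_div_poch (c - a) c).mul
    (tendsto_rpow_mul_poch_div_poch (c - b) (c - a - b))
  rw [div_mul_div_comm] at h
  rw [← tendsto_add_atTop_iff_nat 1]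
  refine h.congr' ?_
  filter_upwards [eventually_ne_atTop 0] with n hn
  have hpow : (n : ℝ) ^ (c - (c - a)) * (n : ℝ) ^ (c - a - b - (c - b)) = 1 := by
    rw [← rpow_add (by positivity)]
    simp
  rw [div_mul_div_comm, mul_mul_mul_comm, hpow, one_mul]

lemma abs_hypergeomTerm_succ_le (a b : ℝ) {u x : ℝ} (hu : 0 < u) (hux : u ≤ x) (n : ℕ) :
    |hypergeomTerm a b x (n + 1)| ≤ u / x * hypergeomTerm |a| |b| u (n + 1) := by
  have hx : 0 < x := hu.trans_le hux
  have hfac : (0 : ℝ) < (n + 1)! := by positivity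
  have hpoch : x / u * poch u (n + 1) ≤ poch x (n + 1) := by
    rw [poch_succ_left, poch_succ_left, ← mul_assoc, div_mul_cancel₀ _ hu.ne']
    exact mul_le_mul_of_nonneg_left (poch_le_poch_s16 (by linarith) (by linarith) n) hx.le
  calc |hypergeomTerm a b x (n + 1)|
      = |poch a (n + 1)| * |poch b (n + 1)| / (poch x (n + 1) * (n + 1)!) := by
        rw [hypergeomTerm, abs_div, abs_mul, abs_of_pos (mul_pos (poch_pos hx _) hfac)]
    _ ≤ poch |a| (n + 1) * poch |b| (n + 1) / (x / u * poch u (n + 1) * (n + 1)!) := by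
        have habs := poch_nonneg_s16 (abs_nonneg a) (n + 1)
        exact div_le_div₀ (mul_nonneg habs (poch_nonneg_s16 (abs_nonneg b) _))
          (mul_le_mul (abs_poch_le a _) (abs_poch_le b _) (abs_nonneg _) habs)
          (mul_pos (mul_pos (div_pos hx hu) (poch_pos hu _)) hfac)
          (mul_le_mul_of_nonneg_right hpoch hfac.le)
    _ = u / x * hypergeomTerm |a| |b| u (n + 1) := by
        rw [hypergeomTerm]
        field_simp

lemma tendsto_hypergeomAtOne_atTop (a b : ℝ) :
    Tendsto (fun x ↦ hypergeomAtOne a b x) atTop (𝓝 1) := by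
  set u := |a| + |b| + 1
  have hu : 0 < u := by positivity
  obtain ⟨S, hS⟩ : Summable fun n ↦ hypergeomTerm |a| |b| u (n + 1) :=
    (summable_nat_add_iff 1).2 (summable_hypergeomTerm (by linarith))
  have hbound : ∀ x, u ≤ x → ‖hypergeomAtOne a b x - 1‖ ≤ u * S / x := by
    intro x hux
    have hle : ∀ n, ‖hypergeomTerm a b x (n + 1)‖ ≤ u / x * hypergeomTerm |a| |b| u (n + 1) :=
      abs_hypergeomTerm_succ_le a b hu hux
    have htail : Summable fun n ↦ hypergeomTerm a b x (n + 1) :=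
      .of_norm_bounded ((hS.mul_left (u / x)).summable) hle
    rw [hypergeomAtOne, ((summable_nat_add_iff 1).1 htail).tsum_eq_zero_add, hypergeomTerm_zero,
      add_sub_cancel_left, mul_div_right_comm]
    exact tsum_of_norm_bounded (hS.mul_left (u / x)) hle
  rw [tendsto_iff_norm_sub_tendsto_zero]
  exact squeeze_zero' (.of_forall fun _ ↦ norm_nonneg _) (eventually_atTop.2 ⟨u, hbound⟩)
    (tendsto_const_nhds.div_atTop tendsto_id)

/-- Gauss summation: for `c` not a nonpositive integer and `c - a - b > 0`, the
series `F(a,b;c;1)` converges and sums to `Γ(c)Γ(c-a-b)/(Γ(c-a)Γ(c-b))`. -/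
theorem gauss_summation (a b c : ℝ) (hc : ∀ n : ℕ, c ≠ -(n : ℝ))
    (h : 0 < c - a - b) :
    Summable (fun n : ℕ => poch a n * poch b n / (poch c n * n.factorial)) ∧
      ∑' n : ℕ, poch a n * poch b n / (poch c n * n.factorial) =
        Real.Gamma c * Real.Gamma (c - a - b) /
          (Real.Gamma (c - a) * Real.Gamma (c - b)) := by
  refine ⟨summable_hypergeomTerm h, ?_⟩
  have hlim := (tendsto_poch_ratio_Gamma a b c).mul ((tendsto_hypergeomAtOne_atTop a b).comp
    (tendsto_atTop_add_const_left _ c tendsto_natCast_atTop_atTop))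
  rw [mul_one] at hlim
  exact tendsto_nhds_unique (tendsto_const_nhds.congr (hypergeomAtOne_eq_mul_shift hc h)) hlim
end
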